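/- arXiv:2603.07671 — 2 statements merged into one kernel-verified Lean document; each statement's English description precedes it below -/
import Mathlib

section
/- (Regret transfer AUC → NDCG) Let Regret_AUC = I/(n⁺n⁻) with I = ∑_{i=1}^{n⁺}(r_i - i), n⁻ = n - n⁺, and Regret_NDCG = (∑_{i=1}^{n⁺}(w(i)-w(r_i)))/(∑_{i=1}^{n⁺} w(i)), where w is strictly decreasing positive on {1,...,n}. If Regret_AUC ≤ ε, then Regret_NDCG ≤ (Δ_max · n⁺ · n⁻ / ∑_{i=1}^{n⁺} w(i)) · ε. -/
/-- Regret transfer AUC → NDCG: if Regret_AUC ≤ ε, then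
Regret_NDCG ≤ (Δ_max · n⁺ · n⁻ / ∑ w(i)) · ε. -/
theorem stmt_7 (n np nm : ℕ) (hn : 2 ≤ n) (hnp : 1 ≤ np) (hnm : 1 ≤ nm)
    (hsum : np + nm = n)
    (w : ℕ → ℝ)
    (hpos : ∀ t : ℕ, 1 ≤ t → t ≤ n → 0 < w t)
    (hdec : ∀ t : ℕ, 1 ≤ t → t < n → w (t + 1) < w t)
    (r : ℕ → ℕ)
    (hrlo : 1 ≤ r 1) (hrhi : r np ≤ n)
    (hri : ∀ i : ℕ, 1 ≤ i → i ≤ np → i ≤ r i)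
    (hmono : ∀ i j : ℕ, 1 ≤ i → i < j → j ≤ np → r i < r j)
    (ε : ℝ)
    (hAUC : (∑ i ∈ Finset.Icc 1 np, ((r i : ℝ) - (i : ℝ))) / ((np : ℝ) * nm) ≤ ε) :
    (∑ i ∈ Finset.Icc 1 np, (w i - w (r i))) / (∑ i ∈ Finset.Icc 1 np, w i) ≤
      (((Finset.Ico 1 n).sup' (by simp; omega) (fun t => w t - w (t + 1))) *
         (np : ℝ) * nm / (∑ i ∈ Finset.Icc 1 np, w i)) * ε := by
  have hne : (Finset.Ico 1 n).Nonempty := by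
    refine ⟨1, ?_⟩; simp; omega
  set Δ : ℝ := (Finset.Ico 1 n).sup' (by simp; omega) (fun t => w t - w (t + 1)) with hΔ
  have hΔle : ∀ t : ℕ, 1 ≤ t → t < n → w t - w (t + 1) ≤ Δ := by
    intro t h1 h2
    exact Finset.le_sup' (fun t => w t - w (t + 1)) (by simp [Finset.mem_Ico]; omega)
  have hΔpos : 0 < Δ := by
    have h1 : w 1 - w 2 ≤ Δ := hΔle 1 le_rfl (by omega)
    have := hdec 1 le_rfl (by omega)
    linarith
  -- telescoping bound
  have key : ∀ d a : ℕ, 1 ≤ a → a + d ≤ n → w a - w (a + d) ≤ Δ * d := by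
    intro d
    induction d with
    | zero => intro a _ _; simp
    | succ d ih =>
      intro a ha hle
      have h1 : w a - w (a + d) ≤ Δ * d := ih a ha (by omega)
      have h2 : w (a + d) - w (a + d + 1) ≤ Δ := hΔle (a + d) (by omega) (by omega)
      push_cast
      have : a + (d + 1) = a + d + 1 := by ring
      rw [this]
      nlinarith
  have hS : 0 < ∑ i ∈ Finset.Icc 1 np, w i := by
    apply Finset.sum_pos
    · intro i hi
      simp [Finset.mem_Icc] at hi
      exact hpos i hi.1 (by omega)
    · exact ⟨1, by simp [Finset.mem_Icc]; omega⟩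
  -- termwise bound
  have hterm : ∀ i ∈ Finset.Icc 1 np, w i - w (r i) ≤ Δ * ((r i : ℝ) - i) := by
    intro i hi
    simp [Finset.mem_Icc] at hi
    have hri' : i ≤ r i := hri i hi.1 hi.2
    have hrn : r i ≤ n := by
      rcases eq_or_lt_of_le hi.2 with h | h
      · rw [h]; exact hrhi
      · exact le_of_lt (lt_of_lt_of_le (hmono i np hi.1 h le_rfl) hrhi)
    have := key (r i - i) i hi.1 (by omega)
    have heq : i + (r i - i) = r i := by omega
    rw [heq] at this
    have : w i - w (r i) ≤ Δ * ((r i - i : ℕ) : ℝ) := this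
    have hc : ((r i - i : ℕ) : ℝ) = (r i : ℝ) - i := by
      push_cast [Nat.cast_sub hri']; ring
    rw [hc] at this
    exact this
  have hsum1 : ∑ i ∈ Finset.Icc 1 np, (w i - w (r i)) ≤
      Δ * ∑ i ∈ Finset.Icc 1 np, ((r i : ℝ) - i) := by
    rw [Finset.mul_sum]
    exact Finset.sum_le_sum hterm
  have hnpnm : (0 : ℝ) < (np : ℝ) * nm := by positivity
  have hI : ∑ i ∈ Finset.Icc 1 np, ((r i : ℝ) - i) ≤ ε * ((np : ℝ) * nm) := by
    rw [div_le_iff₀ hnpnm] at hAUC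
    exact hAUC
  have hchain : ∑ i ∈ Finset.Icc 1 np, (w i - w (r i)) ≤ Δ * (np : ℝ) * nm * ε := by
    calc ∑ i ∈ Finset.Icc 1 np, (w i - w (r i))
        ≤ Δ * ∑ i ∈ Finset.Icc 1 np, ((r i : ℝ) - i) := hsum1
      _ ≤ Δ * (ε * ((np : ℝ) * nm)) := by
          exact mul_le_mul_of_nonneg_left hI (le_of_lt hΔpos)
      _ = Δ * (np : ℝ) * nm * ε := by ring
  rw [div_le_iff₀ hS]
  have : Δ * (np : ℝ) * nm / (∑ i ∈ Finset.Icc 1 np, w i) * ε *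
      (∑ i ∈ Finset.Icc 1 np, w i) = Δ * (np : ℝ) * nm * ε := by
    field_simp
  rw [this]
  exact hchain
end

section
/- (Truncation inclusion of optimal permutations) Let w(1) > ... > w(n) ≥ 0 and define the truncated weights w_k(i) = w(i) if i ≤ k and 0 otherwise. Any permutation σ maximizing ∑_{i=1}^n w(i) η_{σ(i)} also maximizes ∑_{i=1}^n w_k(i) η_{σ(i)} for every k ≤ n. -/
/-- Truncation inclusion: with w(1) > … > w(n) ≥ 0 and
truncated weights w_k(i) = w(i)·1[i ≤ k], any σ maximizing the full
weighted sum also maximizes every truncated sum (k ≤ n). -/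
theorem stmt_11 (n : ℕ) (w η : Fin n → ℝ)
    (hdec : StrictAnti w) (hnonneg : ∀ i, 0 ≤ w i)
    (σ : Equiv.Perm (Fin n))
    (hopt : ∀ τ : Equiv.Perm (Fin n),
        ∑ i, w i * η (τ i) ≤ ∑ i, w i * η (σ i)) :
    ∀ k : ℕ, k ≤ n → ∀ τ : Equiv.Perm (Fin n),
      ∑ i : Fin n, (if (i : ℕ) < k then w i else 0) * η (τ i) ≤
      ∑ i : Fin n, (if (i : ℕ) < k then w i else 0) * η (σ i) := by
  -- η ∘ σ is antitone
  have hg : Antitone (fun i => η (σ i)) := by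
    intro i j hij
    rcases eq_or_lt_of_le hij with rfl | hij
    · exact le_rfl
    by_contra hlt
    push_neg at hlt
    -- swap improves the sum
    have hij' : i ≠ j := ne_of_lt hij
    set τ : Equiv.Perm (Fin n) := σ * Equiv.swap i j with hτ
    have hsub : ({i, j} : Finset (Fin n)) ⊆ Finset.univ := Finset.subset_univ _
    have hsplit : ∀ F : Fin n → ℝ,
        ∑ m, F m = ∑ m ∈ Finset.univ \ {i, j}, F m + (F i + F j) := by
      intro F
      rw [← Finset.sum_pair hij', Finset.sum_sdiff hsub]
    have hrest : ∑ m ∈ Finset.univ \ {i, j}, w m * η (τ m)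
        = ∑ m ∈ Finset.univ \ {i, j}, w m * η (σ m) := by
      refine Finset.sum_congr rfl fun m hm => ?_
      simp only [Finset.mem_sdiff, Finset.mem_insert, Finset.mem_singleton] at hm
      have h1 : m ≠ i := fun h => hm.2 (Or.inl h)
      have h2 : m ≠ j := fun h => hm.2 (Or.inr h)
      simp [hτ, Equiv.swap_apply_of_ne_of_ne h1 h2]
    have hτi : τ i = σ j := by simp [hτ]
    have hτj : τ j = σ i := by simp [hτ]
    have hgt : ∑ m, w m * η (σ m) < ∑ m, w m * η (τ m) := by
      rw [hsplit (fun m => w m * η (τ m)), hsplit (fun m => w m * η (σ m)), hrest]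
      have hw : w j < w i := hdec hij
      have := mul_lt_mul_of_pos_left hlt (sub_pos.mpr hw)
      rw [hτi, hτj]
      nlinarith [hdec hij, hlt]
    exact absurd (hopt τ) (not_le.mpr hgt)
  intro k hk τ
  set g : Fin n → ℝ := fun i => η (σ i) with hgdef
  set f : Fin n → ℝ := fun i => if (i : ℕ) < k then w i else 0 with hfdef
  have hf : Antitone f := by
    intro i j hij
    simp only [hfdef]
    by_cases hjk : (j : ℕ) < k
    · have hik : (i : ℕ) < k := lt_of_le_of_lt (by exact_mod_cast hij) hjk
      simp [hik, hjk, hdec.antitone hij]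
    · by_cases hik : (i : ℕ) < k <;> simp [hik, hjk, hnonneg i]
  have hmono : Monovary f g := by
    intro i j hgij
    have : j < i := by
      by_contra h
      push_neg at h
      exact absurd (hg h) (not_le.mpr hgij)
    exact hf this.le
  have key := hmono.sum_mul_comp_perm_le_sum_mul (σ := σ⁻¹ * τ)
  calc ∑ i : Fin n, (if (i : ℕ) < k then w i else 0) * η (τ i)
      = ∑ i, f i * g ((σ⁻¹ * τ) i) := by
        refine Finset.sum_congr rfl fun i _ => ?_
        simp [hfdef, hgdef]
    _ ≤ ∑ i, f i * g i := key
    _ = ∑ i : Fin n, (if (i : ℕ) < k then w i else 0) * η (σ i) := rfl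
end
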